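/- arXiv:2306.15883 — 7 statements merged into one kernel-verified Lean document; each statement's English description precedes it below -/
import Mathlib

section
/- Let l ≥ 1, let n₁, …, n_l be positive integers and a₁, …, a_l be integers. In the ring ℚ⟦t⟧ of formal power series over ℚ, the Lefschetz zeta series Z(t) := exp(∑_{m≥1} (L(m)/m) t^m), where L(m) := ∏_{i=1}^{l} (1 + (−1)^{n_i} a_i^m), satisfies the product formula Z(t) = (1 − t)^{−1} · ∏_{∅ ≠ S ⊆ {1,…,l}} (1 − (∏_{i∈S} a_i) t)^{(−1)^{(∑_{i∈S} n_i) − 1}}, i.e. each nonempty subset S contributes the factor (1 − (∏_{i∈S} a_i) t) if ∑_{i∈S} n_i is odd and the inverse of that factor (which is a unit in ℚ⟦t⟧) if ∑_{i∈S} n_i is even. -/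
/-!
Expanding the product gives `L(m) = ∑_S (-1)^(∑_{i∈S} nᵢ) (∏_{i∈S} aᵢ)^m`, so the exponent is
`∑_S ± (-log (1 - a_S t))` and `exp` turns it into the product of the factors
`(1 - a_S t)^(∓1)`; the empty set contributes `(1 - t)⁻¹`. Both properties of `exp` this needs,
`exp (f + g) = exp f · exp g` and `exp (log (1 - c t)) = 1 - c t`, follow from uniqueness of
solutions of `Y' = P Y`, since `exp g` solves `Y' = g' Y`.
-/

open PowerSeries Finset

/-- Formal exponential of a power series (the genuine exponential composition when the
constant coefficient of `g` is zero): coefficient `n` of `exp g = ∑ₖ gᵏ/k!` only involves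
`k ≤ n` since `g` has zero constant term. -/
noncomputable def psExp (g : PowerSeries ℚ) : PowerSeries ℚ :=
  PowerSeries.mk fun n =>
    PowerSeries.coeff n (∑ k ∈ Finset.range (n + 1), (k.factorial : ℚ)⁻¹ • g ^ k)

theorem coeff_pow_eq_zero_of_constantCoeff_eq_zero {R : Type*} [CommSemiring R] {g : R⟦X⟧}
    (hg : constantCoeff g = 0) {n k : ℕ} (h : n < k) : coeff n (g ^ k) = 0 :=
  X_pow_dvd_iff.mp (pow_dvd_pow_of_dvd (X_dvd_iff.mpr hg) k) n h

theorem psExp_eq_subst_exp {g : ℚ⟦X⟧} (hg : constantCoeff g = 0) :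
    psExp g = (exp ℚ).subst g := by
  ext n
  have hsupp : Function.support (fun d => coeff d (exp ℚ) • coeff n (g ^ d)) ⊆
      ↑(range (n + 1)) := fun d hd => by
    by_contra hdn
    exact hd (by simp [coeff_pow_eq_zero_of_constantCoeff_eq_zero hg
      (show n < d by simpa using hdn)])
  rw [coeff_subst' (HasSubst.of_constantCoeff_zero' hg), finsum_eq_sum_of_support_subset _ hsupp]
  simp [psExp, map_sum]

theorem derivative_psExp {g : ℚ⟦X⟧} (hg : constantCoeff g = 0) :
    d⁄dX ℚ (psExp g) = d⁄dX ℚ g * psExp g := by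
  rw [psExp_eq_subst_exp hg, derivative_subst (HasSubst.of_constantCoeff_zero' hg),
    derivative_exp, mul_comm]

theorem constantCoeff_psExp (g : ℚ⟦X⟧) : constantCoeff (psExp g) = 1 := by
  rw [← coeff_zero_eq_constantCoeff_apply]
  simp [psExp]

theorem eq_of_derivative_eq_mul {R : Type*} [CommRing R] [IsAddTorsionFree R] {P Y Z : R⟦X⟧}
    (hY : d⁄dX R Y = P * Y) (hZ : d⁄dX R Z = P * Z) (h0 : constantCoeff Y = constantCoeff Z) :
    Y = Z := by
  ext n
  induction n using Nat.strong_induction_on with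
  | _ n ih =>
    rcases n with _ | m
    · simpa [coeff_zero_eq_constantCoeff] using h0
    have hPY : coeff m (P * Y) = coeff m (P * Z) := by
      simp only [coeff_mul]
      exact sum_congr rfl fun p hp => by
        rw [ih p.2 (by have := mem_antidiagonal.mp hp; omega)]
    have h : (m + 1) • coeff (m + 1) Y = (m + 1) • coeff (m + 1) Z := by
      simpa [← hY, ← hZ, coeff_derivative, nsmul_eq_mul, mul_comm] using hPY
    exact (smul_right_inj m.succ_ne_zero).mp h

theorem psExp_add {f g : ℚ⟦X⟧} (hf : constantCoeff f = 0) (hg : constantCoeff g = 0) :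
    psExp (f + g) = psExp f * psExp g := by
  refine eq_of_derivative_eq_mul (derivative_psExp (by simp [hf, hg])) ?_
    (by simp [constantCoeff_psExp])
  rw [Derivation.leibniz, smul_eq_mul, smul_eq_mul, derivative_psExp hf, derivative_psExp hg,
    map_add]
  ring

theorem psExp_zero : psExp 0 = 1 := by
  ext n
  simp [psExp, sum_range_succ']

theorem psExp_sum {ι : Type*} (s : Finset ι) (f : ι → ℚ⟦X⟧)
    (hf : ∀ i ∈ s, constantCoeff (f i) = 0) :
    psExp (∑ i ∈ s, f i) = ∏ i ∈ s, psExp (f i) := by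
  induction s using Finset.cons_induction with
  | empty => exact psExp_zero
  | cons i s _ ih =>
    rw [forall_mem_cons] at hf
    rw [sum_cons, prod_cons, psExp_add hf.1 (by simp [map_sum, sum_eq_zero hf.2]), ih hf.2]

theorem rescale_mk_one_mul_one_sub {R : Type*} [CommRing R] (c : R) :
    rescale c (mk 1) * (1 - C c * X) = 1 := by
  simpa [rescale_X] using congrArg (rescale c) (mk_one_mul_one_sub_eq_one R)

/-- `-log (1 - c X)` -/
noncomputable def negLogOneSub (c : ℚ) : ℚ⟦X⟧ :=
  mk fun m => if m = 0 then 0 else c ^ m / m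

@[simp]
theorem constantCoeff_negLogOneSub (c : ℚ) : constantCoeff (negLogOneSub c) = 0 := by
  rw [← coeff_zero_eq_constantCoeff_apply]
  simp [negLogOneSub]

theorem derivative_negLogOneSub (c : ℚ) : d⁄dX ℚ (negLogOneSub c) = C c * rescale c (mk 1) := by
  ext n
  have : (n : ℚ) + 1 ≠ 0 := by positivity
  simp [coeff_derivative, negLogOneSub, coeff_rescale]
  field_simp
  ring

theorem psExp_neg_negLogOneSub (c : ℚ) : psExp (-negLogOneSub c) = 1 - C c * X := by
  refine eq_of_derivative_eq_mul (derivative_psExp (by simp)) ?_ (by simp [constantCoeff_psExp])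
  calc d⁄dX ℚ (1 - C c * X) = -C c * (rescale c (mk 1) * (1 - C c * X)) := by
        simp [rescale_mk_one_mul_one_sub]
    _ = d⁄dX ℚ (-negLogOneSub c) * (1 - C c * X) := by
        rw [map_neg, derivative_negLogOneSub]
        ring

theorem psExp_negLogOneSub (c : ℚ) : psExp (negLogOneSub c) = (1 - C c * X)⁻¹ := by
  rw [PowerSeries.eq_inv_iff_mul_eq_one (by simp), ← psExp_neg_negLogOneSub,
    ← psExp_add (by simp) (by simp), add_neg_cancel, psExp_zero]

theorem psExp_neg_one_pow_smul_negLogOneSub (k : ℕ) (c : ℚ) :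
    psExp ((-1 : ℚ) ^ k • negLogOneSub c) =
      if Odd k then 1 - C c * X else (1 - C c * X)⁻¹ := by
  rcases k.even_or_odd with hk | hk
  · rw [hk.neg_one_pow, one_smul, if_neg (Nat.not_odd_iff_even.mpr hk), psExp_negLogOneSub]
  · rw [hk.neg_one_pow, neg_one_smul, if_pos hk, psExp_neg_negLogOneSub]

theorem mk_sum_mul_pow_div_eq_sum_smul_negLogOneSub {ι : Type*} (s : Finset ι) (w c : ι → ℚ) :
    (mk fun m => if m = 0 then 0 else (∑ j ∈ s, w j * c j ^ m) / m) =
      ∑ j ∈ s, w j • negLogOneSub (c j) := by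
  ext m
  by_cases hm : m = 0 <;> simp [hm, negLogOneSub, map_sum, sum_div, mul_div_assoc]

theorem prod_one_add_neg_one_pow_mul_pow {ι R : Type*} [CommRing R] (s : Finset ι) (n : ι → ℕ)
    (a : ι → R) (m : ℕ) :
    ∏ i ∈ s, (1 + (-1) ^ n i * a i ^ m) =
      ∑ S ∈ s.powerset, (-1) ^ (∑ i ∈ S, n i) * (∏ i ∈ S, a i) ^ m := by
  simp only [prod_one_add, prod_mul_distrib, prod_pow_eq_pow_sum, prod_pow]

theorem lefschetz_zeta_product_of_spheres_general
    (l : ℕ) (n : Fin l → ℕ) (a : Fin l → ℤ) :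
    psExp (PowerSeries.mk fun m =>
        if m = 0 then 0 else (∏ i, (1 + (-1) ^ n i * (a i : ℚ) ^ m)) / m) =
      (1 - PowerSeries.X : PowerSeries ℚ)⁻¹ *
        ∏ S ∈ (Finset.univ : Finset (Fin l)).powerset.erase ∅,
          (if Odd (∑ i ∈ S, n i) then
              1 - PowerSeries.C (∏ i ∈ S, (a i : ℚ)) * PowerSeries.X
           else
              (1 - PowerSeries.C (∏ i ∈ S, (a i : ℚ)) * PowerSeries.X)⁻¹) := by
  simp only [prod_one_add_neg_one_pow_mul_pow, mk_sum_mul_pow_div_eq_sum_smul_negLogOneSub]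
  rw [psExp_sum _ _ fun S _ => by simp, ← mul_prod_erase _ _ (empty_mem_powerset univ)]
  simp only [psExp_neg_one_pow_smul_negLogOneSub]
  simp

/-- The Lefschetz zeta function of a self-map of a product of spheres
`S^{n₁} × ⋯ × S^{n_l}` with basic eigenvalues `a₁, …, a_l` equals
`(1-t)⁻¹ ∏_{∅ ≠ S ⊆ {1,…,l}} (1 - (∏_{i∈S} aᵢ) t)^{(-1)^{(∑_{i∈S} nᵢ) - 1}}`. -/
theorem lefschetz_zeta_product_of_spheres
    (l : ℕ) (hl : 1 ≤ l) (n : Fin l → ℕ) (hn : ∀ i, 0 < n i) (a : Fin l → ℤ) :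
    psExp (PowerSeries.mk fun m =>
        if m = 0 then 0 else (∏ i, (1 + (-1) ^ n i * (a i : ℚ) ^ m)) / m) =
      (1 - PowerSeries.X : PowerSeries ℚ)⁻¹ *
        ∏ S ∈ (Finset.univ : Finset (Fin l)).powerset.erase ∅,
          (if Odd (∑ i ∈ S, n i) then
              1 - PowerSeries.C (∏ i ∈ S, (a i : ℚ)) * PowerSeries.X
           else
              (1 - PowerSeries.C (∏ i ∈ S, (a i : ℚ)) * PowerSeries.X)⁻¹) :=
  lefschetz_zeta_product_of_spheres_general l n a
end

section
/- Let l ≥ 1, let n₁, …, n_l be positive integers and a₁, …, a_l integers, and set L(m) := ∏_{i=1}^{l} (1 + (−1)^{n_i} a_i^m) and ℓ(m) := ∑_{r ∣ m} μ(m/r) L(r). Then for every integer m > 1, ℓ(m) = ∑_{∅ ≠ S ⊆ {1,…,l}} (−1)^{∑_{i∈S} n_i} Q_m(∏_{i∈S} a_i), where Q_m(x) := ∑_{r ∣ m} μ(r) x^{m/r}. -/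
open Finset

theorem sum_moebius_divisors_eq_zero (m : ℕ) (hm : 1 < m) :
    (∑ d ∈ m.divisors, ArithmeticFunction.moebius d) = 0 := by
  have h := congrArg (fun f : ArithmeticFunction ℤ => f m)
    ArithmeticFunction.moebius_mul_coe_zeta
  simp only [ArithmeticFunction.coe_mul_zeta_apply, ArithmeticFunction.one_apply] at h
  rw [h, if_neg (by omega)]

/-- For `m > 1`, the Lefschetz number of period `m`, `ℓ(m) = ∑_{r∣m} μ(m/r) L(r)` with
`L(r) = ∏ᵢ (1 + (-1)^{nᵢ} aᵢʳ)`, equals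
`∑_{∅ ≠ S ⊆ {1,…,l}} (-1)^{∑_{i∈S} nᵢ} Q_m(∏_{i∈S} aᵢ)`, where
`Q_m(x) = ∑_{r∣m} μ(r) x^{m/r}`. -/
theorem lefschetz_period_number_subset_expansion
    (l : ℕ) (hl : 1 ≤ l) (n : Fin l → ℕ) (hn : ∀ i, 0 < n i) (a : Fin l → ℤ)
    (m : ℕ) (hm : 1 < m) :
    (∑ r ∈ m.divisors, ArithmeticFunction.moebius (m / r) *
        ∏ i, (1 + (-1) ^ n i * a i ^ r)) =
      ∑ S ∈ (Finset.univ : Finset (Fin l)).powerset.erase ∅,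
        (-1 : ℤ) ^ (∑ i ∈ S, n i) *
          ∑ r ∈ m.divisors, ArithmeticFunction.moebius r * (∏ i ∈ S, a i) ^ (m / r) := by
  have expand : ∀ r : ℕ, (∏ i, (1 + (-1 : ℤ) ^ n i * a i ^ r)) =
      ∑ S ∈ (Finset.univ : Finset (Fin l)).powerset,
        (-1 : ℤ) ^ (∑ i ∈ S, n i) * (∏ i ∈ S, a i) ^ r := by
    intro r
    have : ∀ i : Fin l, (1 + (-1 : ℤ) ^ n i * a i ^ r)
        = ((-1 : ℤ) ^ n i * a i ^ r + 1) := fun i => by ring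
    rw [Finset.prod_congr rfl fun i _ => this i, Finset.prod_add]
    refine Finset.sum_congr rfl fun S _ => ?_
    rw [Finset.prod_const_one, mul_one, Finset.prod_mul_distrib,
      Finset.prod_pow_eq_pow_sum, ← Finset.prod_pow]
  -- rewrite RHS inner sums: ∑_r μ r x^(m/r) = ∑_r μ(m/r) x^r
  have reindex : ∀ x : ℤ, (∑ r ∈ m.divisors, (ArithmeticFunction.moebius r : ℤ) * x ^ (m / r))
      = ∑ r ∈ m.divisors, (ArithmeticFunction.moebius (m / r) : ℤ) * x ^ r := by
    intro x
    rw [← Nat.sum_div_divisors m (fun r => (ArithmeticFunction.moebius (m / r) : ℤ) * x ^ r)]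
    refine Finset.sum_congr rfl fun r hr => ?_
    rw [Nat.div_div_self (Nat.mem_divisors.mp hr).1 (by omega)]
  calc (∑ r ∈ m.divisors, (ArithmeticFunction.moebius (m / r) : ℤ) *
        ∏ i, (1 + (-1 : ℤ) ^ n i * a i ^ r))
      = ∑ r ∈ m.divisors, ∑ S ∈ (Finset.univ : Finset (Fin l)).powerset,
          (ArithmeticFunction.moebius (m / r) : ℤ) *
            ((-1 : ℤ) ^ (∑ i ∈ S, n i) * (∏ i ∈ S, a i) ^ r) := by
        refine Finset.sum_congr rfl fun r _ => ?_
        rw [expand r, Finset.mul_sum]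
    _ = ∑ S ∈ (Finset.univ : Finset (Fin l)).powerset,
          (-1 : ℤ) ^ (∑ i ∈ S, n i) * ∑ r ∈ m.divisors,
            (ArithmeticFunction.moebius (m / r) : ℤ) * (∏ i ∈ S, a i) ^ r := by
        rw [Finset.sum_comm]
        refine Finset.sum_congr rfl fun S _ => ?_
        rw [Finset.mul_sum]
        refine Finset.sum_congr rfl fun r _ => by ring
    _ = ∑ S ∈ (Finset.univ : Finset (Fin l)).powerset.erase ∅,
          (-1 : ℤ) ^ (∑ i ∈ S, n i) * ∑ r ∈ m.divisors,
            (ArithmeticFunction.moebius (m / r) : ℤ) * (∏ i ∈ S, a i) ^ r := by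
        rw [← Finset.sum_erase_add _ _ (Finset.empty_mem_powerset _)]
        simp only [Finset.sum_empty, Finset.prod_empty, pow_zero, one_pow, mul_one, one_mul]
        rw [show (∑ r ∈ m.divisors, ((ArithmeticFunction.moebius (m / r) : ℤ)))
            = ∑ r ∈ m.divisors, (ArithmeticFunction.moebius r : ℤ) from
          Nat.sum_div_divisors m (fun r => (ArithmeticFunction.moebius r : ℤ)),
          sum_moebius_divisors_eq_zero m hm, add_zero]
    _ = _ := by
        refine Finset.sum_congr rfl fun S _ => ?_
        rw [reindex]
end

section
/- Let l ≥ 1, let n₁, …, n_l be positive integers and a₁, …, a_l integers with |a_i| > 1 for every i ∈ {1,…,l}. Then there exists N > 0 such that ℓ(m) ≠ 0 for every integer m > N, where ℓ(m) := ∑_{r ∣ m} μ(m/r) ∏_{i=1}^{l} (1 + (−1)^{n_i} a_i^r). -/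
open Finset

private lemma aux_pow (j : ℕ) (hj : 5 ≤ j) : 4 * j + 1 < 2 ^ j := by
  induction j with
  | zero => omega
  | succ k ih =>
    rcases Nat.lt_or_ge k 5 with h | h
    · have hk4 : k = 4 := by omega
      subst hk4; norm_num
    · have h1 := ih (by omega)
      have h2 : 2 ^ (k + 1) = 2 * 2 ^ k := by ring
      omega

private lemma aux_growth (l m : ℕ) (hm : 8 * l + 16 < m) : 4 ^ l * m < 2 ^ (m / 2) := by
  have hk : 4 * l + 8 ≤ m / 2 := by omega
  set j := m / 2 - 2 * l with hjdef
  have hj : 2 * l + 8 ≤ j := by omega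
  have h1 : 4 * j + 1 < 2 ^ j := aux_pow j (by omega)
  have hm2 : m ≤ 4 * j + 1 := by omega
  calc 4 ^ l * m ≤ 4 ^ l * (4 * j + 1) := Nat.mul_le_mul_left _ hm2
    _ < 4 ^ l * 2 ^ j := by exact mul_lt_mul_of_pos_left h1 (by positivity)
    _ = 2 ^ (2 * l) * 2 ^ j := by rw [pow_mul]; norm_num
    _ = 2 ^ (2 * l + j) := by rw [pow_add]
    _ = 2 ^ (m / 2) := by congr 1; omega

private lemma abs_moebius_le_one' (k : ℕ) : |ArithmeticFunction.moebius k| ≤ 1 := by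
  by_cases h : Squarefree k
  · rw [ArithmeticFunction.moebius_apply_of_squarefree h, abs_pow, abs_neg, abs_one, one_pow]
  · rw [ArithmeticFunction.moebius_eq_zero_of_not_squarefree h]; norm_num

/-- If `|aᵢ| > 1` for every `i`, then `ℓ(m) ≠ 0` for all sufficiently large `m`, where
`ℓ(m) = ∑_{r∣m} μ(m/r) ∏ᵢ (1 + (-1)^{nᵢ} aᵢʳ)`. -/
theorem lefschetz_period_numbers_eventually_nonzero_all_large
    (l : ℕ) (hl : 1 ≤ l) (n : Fin l → ℕ) (hn : ∀ i, 0 < n i) (a : Fin l → ℤ)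
    (ha : ∀ i, 1 < |a i|) :
    ∃ N : ℕ, 0 < N ∧ ∀ m : ℕ, N < m →
      (∑ r ∈ m.divisors, ArithmeticFunction.moebius (m / r) *
          ∏ i, (1 + (-1) ^ n i * a i ^ r)) ≠ 0 := by
  classical
  set A : ℤ := ∏ i, |a i| with hAdef
  have hai : ∀ i, 2 ≤ |a i| := fun i => ha i
  have hA2l : (2 : ℤ) ^ l ≤ A := by
    have h0 : (2 : ℤ) ^ l = ∏ _i : Fin l, (2 : ℤ) := by simp
    rw [hAdef, h0]
    exact Finset.prod_le_prod (fun i _ => by norm_num) (fun i _ => hai i)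
  have hA2 : (2 : ℤ) ≤ A := by
    calc (2:ℤ) = 2 ^ 1 := (pow_one 2).symm
    _ ≤ 2 ^ l := pow_le_pow_right₀ (by norm_num) hl
    _ ≤ A := hA2l
  have hA1 : (1 : ℤ) ≤ A := by linarith
  set L : ℕ → ℤ := fun r => ∏ i, (1 + (-1) ^ n i * a i ^ r) with hLdef
  have habs : ∀ (i : Fin l) (r : ℕ), |(-1 : ℤ) ^ n i * a i ^ r| = |a i| ^ r := by
    intro i r
    rw [abs_mul, abs_pow, abs_pow, abs_neg, abs_one, one_pow, one_mul]
  have hpow1 : ∀ (i : Fin l) (r : ℕ), (1 : ℤ) ≤ |a i| ^ r := by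
    intro i r
    calc (1 : ℤ) = 1 ^ r := (one_pow r).symm
    _ ≤ |a i| ^ r := pow_le_pow_left₀ (by norm_num) (by linarith [hai i]) r
  have hApow : ∀ r : ℕ, A ^ r = ∏ i, |a i| ^ r := by
    intro r; rw [hAdef, ← Finset.prod_pow]
  -- Upper bound on |L r|
  have hupper : ∀ r : ℕ, |L r| ≤ 2 ^ l * A ^ r := by
    intro r
    rw [hLdef]
    simp only []
    have h0 : (2:ℤ) ^ l * A ^ r = ∏ i : Fin l, (2 * |a i| ^ r) := by
      rw [Finset.prod_mul_distrib, hApow]; simp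
    rw [Finset.abs_prod, h0]
    refine Finset.prod_le_prod (fun i _ => abs_nonneg _) (fun i _ => ?_)
    calc |1 + (-1 : ℤ) ^ n i * a i ^ r| ≤ |(1 : ℤ)| + |(-1 : ℤ) ^ n i * a i ^ r| :=
          abs_add_le _ _
      _ = 1 + |a i| ^ r := by rw [habs, abs_one]
      _ ≤ 2 * |a i| ^ r := by linarith [hpow1 i r]
  -- Lower bound on |L m| for m ≥ 1
  have hlower : ∀ m : ℕ, 1 ≤ m → A ^ m ≤ 2 ^ l * |L m| := by
    intro m hm
    rw [hLdef]
    simp only []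
    have h0 : (2:ℤ) ^ l * |∏ i : Fin l, (1 + (-1) ^ n i * a i ^ m)| =
        ∏ i : Fin l, (2 * |1 + (-1) ^ n i * a i ^ m|) := by
      rw [Finset.prod_mul_distrib, Finset.abs_prod]; simp
    rw [h0, hApow]
    refine Finset.prod_le_prod (fun i _ => pow_nonneg (abs_nonneg _) m) (fun i _ => ?_)
    have h2 : (2 : ℤ) ≤ |a i| ^ m := le_trans (hai i) (le_self_pow₀ (by linarith [hai i]) (by omega))
    have h3 : |a i| ^ m - 1 ≤ |1 + (-1 : ℤ) ^ n i * a i ^ m| := by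
      have := abs_add_le (1 + (-1 : ℤ) ^ n i * a i ^ m) (-1)
      have h4 : |(-1 : ℤ) ^ n i * a i ^ m| = |a i| ^ m := habs i m
      have h5 : (1 + (-1 : ℤ) ^ n i * a i ^ m) + (-1) = (-1 : ℤ) ^ n i * a i ^ m := by ring
      rw [h5, h4] at this
      simp only [abs_neg, abs_one] at this
      linarith
    linarith
  refine ⟨8 * l + 16, by omega, fun m hm => ?_⟩
  have hm0 : m ≠ 0 := by omega
  have hmem : m ∈ m.divisors := Nat.mem_divisors_self m hm0
  intro hzero
  rw [← Finset.add_sum_erase _ _ hmem] at hzero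
  rw [Nat.div_self (by omega : 0 < m), ArithmeticFunction.moebius_apply_one, one_mul] at hzero
  -- so L m = - rest
  have hLm : L m = -(∑ r ∈ m.divisors.erase m, ArithmeticFunction.moebius (m / r) *
      ∏ i, (1 + (-1) ^ n i * a i ^ r)) := by
    rw [hLdef]; simp only []; linarith [hzero]
  -- bound the rest
  have hbound : |L m| ≤ (m : ℤ) * (2 ^ l * A ^ (m / 2)) := by
    rw [hLm, abs_neg]
    calc |∑ r ∈ m.divisors.erase m, ArithmeticFunction.moebius (m / r) *
            ∏ i, (1 + (-1) ^ n i * a i ^ r)|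
        ≤ ∑ r ∈ m.divisors.erase m, |ArithmeticFunction.moebius (m / r) *
            ∏ i, (1 + (-1) ^ n i * a i ^ r)| := Finset.abs_sum_le_sum_abs _ _
      _ ≤ ∑ _r ∈ m.divisors.erase m, (2 ^ l * A ^ (m / 2)) := by
          refine Finset.sum_le_sum (fun r hr => ?_)
          have hrdvd : r ∣ m := (Nat.mem_divisors.mp (Finset.mem_of_mem_erase hr)).1
          have hrne : r ≠ m := Finset.ne_of_mem_erase hr
          have hr2 : r ≤ m / 2 := by
            obtain ⟨t, ht⟩ := hrdvd
            have ht2 : 2 ≤ t := by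
              rcases Nat.lt_or_ge t 2 with h | h
              · interval_cases t <;> omega
              · exact h
            have h2r : 2 * r ≤ m := by
              calc 2 * r ≤ t * r := Nat.mul_le_mul ht2 (le_refl r)
                _ = m := by rw [ht, Nat.mul_comm]
            omega
          have hAr : A ^ r ≤ A ^ (m / 2) := pow_le_pow_right₀ hA1 hr2
          rw [abs_mul]
          calc |ArithmeticFunction.moebius (m / r)| *
                |∏ i, (1 + (-1) ^ n i * a i ^ r)|
              ≤ 1 * (2 ^ l * A ^ r) := by
                refine mul_le_mul (abs_moebius_le_one' _) (hupper r) (abs_nonneg _) (by norm_num)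
            _ = 2 ^ l * A ^ r := by ring
            _ ≤ 2 ^ l * A ^ (m / 2) := by
                have : (0:ℤ) < 2 ^ l := by positivity
                nlinarith
      _ = ((m.divisors.erase m).card : ℤ) * (2 ^ l * A ^ (m / 2)) := by
          rw [Finset.sum_const, nsmul_eq_mul]
      _ ≤ (m : ℤ) * (2 ^ l * A ^ (m / 2)) := by
          have hcard : (m.divisors.erase m).card ≤ m := by
            have h1 : m.divisors.erase m ⊆ Finset.Icc 1 m := by
              intro r hr
              have := Nat.mem_divisors.mp (Finset.mem_of_mem_erase hr)
              have hrpos : 0 < r := Nat.pos_of_mem_divisors (Finset.mem_of_mem_erase hr)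
              have hrle : r ≤ m := Nat.le_of_dvd (by omega) this.1
              exact Finset.mem_Icc.mpr ⟨hrpos, hrle⟩
            calc (m.divisors.erase m).card ≤ (Finset.Icc 1 m).card := Finset.card_le_card h1
              _ = m := by rw [Nat.card_Icc]; omega
          have hpos : (0:ℤ) ≤ 2 ^ l * A ^ (m / 2) := by positivity
          have : ((m.divisors.erase m).card : ℤ) ≤ (m : ℤ) := by exact_mod_cast hcard
          nlinarith
  -- combine
  have hfinal : A ^ m ≤ 4 ^ l * (m : ℤ) * A ^ (m / 2) := by
    calc A ^ m ≤ 2 ^ l * |L m| := hlower m (by omega)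
      _ ≤ 2 ^ l * ((m : ℤ) * (2 ^ l * A ^ (m / 2))) := by
          have : (0:ℤ) < 2 ^ l := by positivity
          nlinarith
      _ = 4 ^ l * (m : ℤ) * A ^ (m / 2) := by
          have : (4 : ℤ) ^ l = 2 ^ l * 2 ^ l := by
            rw [← mul_pow]; norm_num
          rw [this]; ring
  -- but A^m > 4^l m A^(m/2)
  have hsplit : A ^ m = A ^ (m - m / 2) * A ^ (m / 2) := by
    rw [← pow_add]; congr 1; omega
  have hApos : (0:ℤ) < A ^ (m / 2) := by positivity
  have hgrow : 4 ^ l * (m : ℤ) < A ^ (m - m / 2) := by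
    have h1 : (4 : ℤ) ^ l * (m : ℤ) < 2 ^ (m / 2) := by
      have := aux_growth l m hm
      exact_mod_cast this
    have h2 : (2 : ℤ) ^ (m / 2) ≤ 2 ^ (m - m / 2) := pow_le_pow_right₀ (by norm_num) (by omega)
    have h3 : (2 : ℤ) ^ (m - m / 2) ≤ A ^ (m - m / 2) := pow_le_pow_left₀ (by norm_num) hA2 _
    linarith
  have : 4 ^ l * (m : ℤ) * A ^ (m / 2) < A ^ m := by
    rw [hsplit]
    exact mul_lt_mul_of_pos_right hgrow hApos
  linarith
end

section
/- Let l ≥ 1, let n₁, …, n_l be positive integers and a₁, …, a_l nonzero integers. Let I := { i ∈ {1,…,l} : |a_i| > 1 }. Assume I ≠ ∅ and that for every i ∉ I one has (−1)^{n_i} a_i = 1 and (−1)^{n_i} a_i² = 1. Then there exists N > 0 such that ℓ(m) ≠ 0 for every integer m > N, where ℓ(m) := ∑_{r ∣ m} μ(m/r) ∏_{i=1}^{l} (1 + (−1)^{n_i} a_i^r). -/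
open Finset Filter ArithmeticFunction
open scoped ArithmeticFunction.Moebius

/-!
Write `L(m) = ∏ᵢ (1 + (-1)^{nᵢ} aᵢ^m)` and `P = ∏ᵢ |aᵢ| ≥ 2`. Every factor of `L(m)` is at most
`2 |aᵢ|^m` in absolute value, and, since each `aᵢ` either has `|aᵢ| ≥ 2` or is `1` with `nᵢ` even,
at least `|aᵢ|^m / 2`; so `|L(m)|` is `P^m` up to the factor `2^l`. In
`ℓ(m) = L(m) + ∑_{r ∣ m, r < m} μ(m/r) L(r)` every proper divisor is at most `m/2`, so the second
sum is `O(P^{m/2})` and cannot cancel `L(m)` once `m` is large.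
-/

theorem Nat.lt_div_two_add_one_of_mem_properDivisors {d m : ℕ} (h : d ∈ m.properDivisors) :
    d < m / 2 + 1 := by
  have hquot : 2 ≤ m / d := Nat.one_lt_div_of_mem_properDivisors h
  have hdvd : d * (m / d) = m := Nat.mul_div_cancel' (Nat.mem_properDivisors.1 h).1
  have : d * 2 ≤ m := hdvd ▸ Nat.mul_le_mul_left d hquot
  omega

theorem abs_sum_properDivisors_moebius_mul_le (f : ℕ → ℤ) {P : ℕ} {C : ℤ} (hP : 2 ≤ P)
    (hupper : ∀ r, |f r| ≤ C * (P : ℤ) ^ r) (m : ℕ) :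
    |∑ r ∈ m.properDivisors, μ (m / r) * f r| ≤ C * (P : ℤ) ^ (m / 2 + 1) := by
  have hC : 0 ≤ C := by simpa using (abs_nonneg (f 0)).trans (hupper 0)
  have hgeom : ∑ r ∈ m.properDivisors, (P : ℤ) ^ r ≤ (P : ℤ) ^ (m / 2 + 1) := by
    exact_mod_cast (Nat.geomSum_lt hP fun r hr =>
      Nat.lt_div_two_add_one_of_mem_properDivisors hr).le
  calc |∑ r ∈ m.properDivisors, μ (m / r) * f r|
      ≤ ∑ r ∈ m.properDivisors, |(μ (m / r) : ℤ) * f r| := abs_sum_le_sum_abs _ _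
    _ ≤ ∑ r ∈ m.properDivisors, C * (P : ℤ) ^ r := by
        refine sum_le_sum fun r _ => ?_
        rw [abs_mul]
        exact (mul_le_of_le_one_left (abs_nonneg _) abs_moebius_le_one).trans (hupper r)
    _ ≤ C * (P : ℤ) ^ (m / 2 + 1) := by
        rw [← mul_sum]
        exact mul_le_mul_of_nonneg_left hgeom hC

theorem eventually_sum_divisors_moebius_mul_ne_zero (f : ℕ → ℤ) {P : ℕ} {C : ℤ} (hP : 2 ≤ P)
    (hupper : ∀ r, |f r| ≤ C * (P : ℤ) ^ r) (hlower : ∀ m, 0 < m → (P : ℤ) ^ m ≤ C * |f m|) :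
    ∀ᶠ m in atTop, ∑ r ∈ m.divisors, μ (m / r) * f r ≠ 0 := by
  have hP1 : (1 : ℤ) < P := by exact_mod_cast hP
  obtain ⟨j, hj⟩ := pow_unbounded_of_one_lt (C * C) hP1
  filter_upwards [eventually_ge_atTop (2 * j + 2)] with m hm hzero
  have hm0 : m ≠ 0 := by omega
  set S := ∑ r ∈ m.properDivisors, μ (m / r) * f r
  have hfm : f m = -S := by
    rw [← Nat.cons_self_properDivisors hm0, sum_cons, Nat.div_self (Nat.pos_of_ne_zero hm0),
      moebius_apply_one, one_mul] at hzero
    linarith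
  have hC : 0 ≤ C := by simpa using (abs_nonneg (f 0)).trans (hupper 0)
  set Q := (P : ℤ) ^ (m / 2 + 1)
  have hsplit : (P : ℤ) ^ m = (P : ℤ) ^ (m - (m / 2 + 1)) * Q := by
    rw [← pow_add]
    congr 1
    omega
  have hj' : (P : ℤ) ^ j ≤ (P : ℤ) ^ (m - (m / 2 + 1)) := pow_le_pow_right₀ hP1.le (by omega)
  have hS := abs_sum_properDivisors_moebius_mul_le f hP hupper m
  have : (P : ℤ) ^ m < (P : ℤ) ^ m := calc
    (P : ℤ) ^ m ≤ C * |S| := by rw [← abs_neg, ← hfm]; exact hlower m (by omega)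
    _ ≤ C * (C * Q) := mul_le_mul_of_nonneg_left hS hC
    _ < (P : ℤ) ^ j * Q := by rw [← mul_assoc]; exact mul_lt_mul_of_pos_right hj (by positivity)
    _ ≤ (P : ℤ) ^ (m - (m / 2 + 1)) * Q := by gcongr
    _ = (P : ℤ) ^ m := hsplit.symm
  exact lt_irrefl _ this

section OrderedRing

variable {R : Type*} [CommRing R] [LinearOrder R] [IsStrictOrderedRing R] {u : R}

theorem abs_one_add_le_two_mul_abs (hu : 1 ≤ |u|) : |1 + u| ≤ 2 * |u| := by
  calc |1 + u| ≤ |1| + |u| := abs_add_le 1 u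
    _ ≤ 2 * |u| := by rw [abs_one]; linarith

theorem abs_le_two_mul_abs_one_add (hu : 2 ≤ |u|) : |u| ≤ 2 * |1 + u| := by
  have h := abs_sub_abs_le_abs_sub u (-1)
  rw [abs_neg, abs_one, sub_neg_eq_add, add_comm] at h
  linarith

end OrderedRing

theorem eq_one_of_mul_eq_one_of_mul_sq_eq_one {R : Type*} [CommRing R] {ε a : R}
    (h₁ : ε * a = 1) (h₂ : ε * a ^ 2 = 1) : ε = 1 ∧ a = 1 := by
  have ha : a = 1 := by rw [← h₂, sq, ← mul_assoc, h₁, one_mul]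
  exact ⟨by simpa [ha] using h₁, ha⟩

theorem two_le_prod_natAbs {ι : Type*} [Fintype ι] {a : ι → ℤ} (ha : ∀ i, a i ≠ 0)
    (h : ∃ j, 1 < |a j|) : 2 ≤ ∏ i, (a i).natAbs := by
  obtain ⟨j, hj⟩ := h
  have hj2 : 1 < (a j).natAbs := by
    rw [Int.abs_eq_natAbs] at hj
    exact_mod_cast hj
  exact hj2.trans_le <| single_le_prod' (f := fun i => (a i).natAbs)
    (fun i _ => Int.natAbs_pos.2 (ha i)) (mem_univ j)

/-- The Lefschetz number `L(f^r)` of a map of `∏ᵢ S^{nᵢ}` with basic eigenvalues `aᵢ`. -/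
def lefschetzNumber {ι : Type*} [Fintype ι] (n : ι → ℕ) (a : ι → ℤ) (r : ℕ) : ℤ :=
  ∏ i, (1 + (-1) ^ n i * a i ^ r)

section Lefschetz

variable {ι : Type*} [Fintype ι] (n : ι → ℕ) {a : ι → ℤ}

theorem abs_neg_one_pow_mul_pow (k r : ℕ) (b : ℤ) : |(-1) ^ k * b ^ r| = |b| ^ r := by
  simp [abs_mul, abs_pow]

theorem abs_lefschetzNumber_le (ha : ∀ i, a i ≠ 0) (r : ℕ) :
    |lefschetzNumber n a r| ≤ 2 ^ Fintype.card ι * (∏ i, |a i|) ^ r := by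
  have hfactor (i : ι) : |1 + (-1) ^ n i * a i ^ r| ≤ 2 * |a i| ^ r := by
    rw [← abs_neg_one_pow_mul_pow (n i)]
    refine abs_one_add_le_two_mul_abs ?_
    rw [abs_neg_one_pow_mul_pow]
    exact one_le_pow₀ (Int.one_le_abs (ha i))
  calc |lefschetzNumber n a r| = ∏ i, |1 + (-1) ^ n i * a i ^ r| := abs_prod _ _
    _ ≤ ∏ i, 2 * |a i| ^ r := prod_le_prod (fun _ _ => abs_nonneg _) fun i _ => hfactor i
    _ = 2 ^ Fintype.card ι * (∏ i, |a i|) ^ r := by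
        rw [prod_mul_distrib, prod_const, prod_pow, card_univ]

theorem pow_le_two_pow_mul_abs_lefschetzNumber
    (ha : ∀ i, 1 < |a i| ∨ (-1) ^ n i = 1 ∧ a i = 1) {m : ℕ} (hm : 0 < m) :
    (∏ i, |a i|) ^ m ≤ 2 ^ Fintype.card ι * |lefschetzNumber n a m| := by
  have hfactor (i : ι) : |a i| ^ m ≤ 2 * |1 + (-1) ^ n i * a i ^ m| := by
    rcases ha i with hbig | ⟨hsign, hone⟩
    · rw [← abs_neg_one_pow_mul_pow (n i)]
      refine abs_le_two_mul_abs_one_add ?_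
      rw [abs_neg_one_pow_mul_pow]
      exact hbig.trans_le (le_self_pow₀ hbig.le hm.ne')
    · simp [hsign, hone]
  calc (∏ i, |a i|) ^ m = ∏ i, |a i| ^ m := (prod_pow _ _ _).symm
    _ ≤ ∏ i, 2 * |1 + (-1) ^ n i * a i ^ m| :=
        prod_le_prod (fun _ _ => by positivity) fun i _ => hfactor i
    _ = 2 ^ Fintype.card ι * |lefschetzNumber n a m| := by
        rw [prod_mul_distrib, prod_const, card_univ, lefschetzNumber, abs_prod]

end Lefschetz

theorem lefschetz_period_numbers_eventually_nonzero_mixed_general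
    (l : ℕ) (n : Fin l → ℕ) (a : Fin l → ℤ)
    (ha0 : ∀ i, a i ≠ 0)
    (hI : ∃ j, 1 < |a j|)
    (hnotI : ∀ i, ¬ (1 < |a i|) → (-1) ^ n i * a i = 1 ∧ (-1) ^ n i * (a i) ^ 2 = 1) :
    ∃ N : ℕ, 0 < N ∧ ∀ m : ℕ, N < m →
      (∑ r ∈ m.divisors, ArithmeticFunction.moebius (m / r) *
          ∏ i, (1 + (-1) ^ n i * a i ^ r)) ≠ 0 := by
  set P := ∏ i, (a i).natAbs
  have hP : (P : ℤ) = ∏ i, |a i| := by simp [P]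
  have hP2 : 2 ≤ P := two_le_prod_natAbs ha0 hI
  have hdichotomy (i : Fin l) : 1 < |a i| ∨ (-1) ^ n i = 1 ∧ a i = 1 :=
    or_iff_not_imp_left.2 fun h =>
      eq_one_of_mul_eq_one_of_mul_sq_eq_one (hnotI i h).1 (hnotI i h).2
  obtain ⟨N, hN⟩ := eventually_atTop.1 <| eventually_sum_divisors_moebius_mul_ne_zero
    (lefschetzNumber n a) hP2 (hP ▸ abs_lefschetzNumber_le n ha0)
    (hP ▸ fun m hm => pow_le_two_pow_mul_abs_lefschetzNumber n hdichotomy hm)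
  exact ⟨N + 1, N.succ_pos, fun m hm => hN m (by omega)⟩

/-- Let `I = {i : |aᵢ| > 1}`. If `I ≠ ∅`, all `aᵢ` are nonzero, and for every `i ∉ I`
one has `(-1)^{nᵢ} aᵢ = 1` and `(-1)^{nᵢ} aᵢ² = 1`, then `ℓ(m) ≠ 0` for all
sufficiently large `m`, where `ℓ(m) = ∑_{r∣m} μ(m/r) ∏ᵢ (1 + (-1)^{nᵢ} aᵢʳ)`. -/
theorem lefschetz_period_numbers_eventually_nonzero_mixed
    (l : ℕ) (hl : 1 ≤ l) (n : Fin l → ℕ) (hn : ∀ i, 0 < n i) (a : Fin l → ℤ)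
    (ha0 : ∀ i, a i ≠ 0)
    (hI : ∃ j, 1 < |a j|)
    (hnotI : ∀ i, ¬ (1 < |a i|) → (-1) ^ n i * a i = 1 ∧ (-1) ^ n i * (a i) ^ 2 = 1) :
    ∃ N : ℕ, 0 < N ∧ ∀ m : ℕ, N < m →
      (∑ r ∈ m.divisors, ArithmeticFunction.moebius (m / r) *
          ∏ i, (1 + (-1) ^ n i * a i ^ r)) ≠ 0 :=
  lefschetz_period_numbers_eventually_nonzero_mixed_general l n a ha0 hI hnotI
end

section
/- Let l ≥ 1, let n₁, …, n_l be positive integers and a₁, …, a_l integers such that a_i = −1 for every i with n_i odd, a_i = 1 for every i with n_i even, and at least one n_i is odd. Then ℓ(1) = 2^l, ℓ(2) = −2^l, and ℓ(m) = 0 for every integer m ≥ 3, where ℓ(m) := ∑_{r ∣ m} μ(m/r) ∏_{i=1}^{l} (1 + (−1)^{n_i} a_i^r). -/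
open Finset

lemma sum_moebius_eq_zero_aux {q : ℕ} (hq : 2 ≤ q) :
    ∑ d ∈ q.divisors, (ArithmeticFunction.moebius d : ℤ) = 0 := by
  have h := congrFun (congrArg (fun f => f.toFun)
    (ArithmeticFunction.moebius_mul_coe_zeta)) q
  have h1 : (1 : ArithmeticFunction ℤ) q = 0 :=
    ArithmeticFunction.one_apply_ne (by omega)
  rw [show (ArithmeticFunction.moebius * ↑ArithmeticFunction.zeta :
    ArithmeticFunction ℤ).toFun q = (ArithmeticFunction.moebius *
    ↑ArithmeticFunction.zeta : ArithmeticFunction ℤ) q from rfl,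
    ArithmeticFunction.coe_mul_zeta_apply] at h
  rw [h]
  rw [show (1 : ArithmeticFunction ℤ).toFun q = (1 : ArithmeticFunction ℤ) q from rfl]
  exact h1

/-- If `aᵢ = -1` whenever `nᵢ` is odd, `aᵢ = 1` whenever `nᵢ` is even, and at least one
`nᵢ` is odd, then `ℓ(1) = 2^l`, `ℓ(2) = -2^l`, and `ℓ(m) = 0` for every `m ≥ 3`, where
`ℓ(m) = ∑_{r∣m} μ(m/r) ∏ᵢ (1 + (-1)^{nᵢ} aᵢʳ)`. -/
theorem lefschetz_period_numbers_modulus_one_odd_minus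
    (l : ℕ) (hl : 1 ≤ l) (n : Fin l → ℕ) (hn : ∀ i, 0 < n i) (a : Fin l → ℤ)
    (haodd : ∀ i, Odd (n i) → a i = -1)
    (haeven : ∀ i, Even (n i) → a i = 1)
    (hodd : ∃ i, Odd (n i)) :
    (∑ r ∈ (1 : ℕ).divisors, ArithmeticFunction.moebius (1 / r) *
        ∏ i, (1 + (-1) ^ n i * a i ^ r)) = 2 ^ l ∧
    (∑ r ∈ (2 : ℕ).divisors, ArithmeticFunction.moebius (2 / r) *
        ∏ i, (1 + (-1) ^ n i * a i ^ r)) = -2 ^ l ∧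
    ∀ m : ℕ, 3 ≤ m →
      (∑ r ∈ m.divisors, ArithmeticFunction.moebius (m / r) *
          ∏ i, (1 + (-1) ^ n i * a i ^ r)) = 0 := by
  -- Value of the product
  have hLodd : ∀ r : ℕ, Odd r → (∏ i, (1 + (-1) ^ n i * a i ^ r)) = 2 ^ l := by
    intro r hr
    have : ∀ i : Fin l, (1 + (-1 : ℤ) ^ n i * a i ^ r) = 2 := by
      intro i
      rcases Nat.even_or_odd (n i) with he | ho
      · rw [haeven i he, he.neg_one_pow]; ring
      · rw [haodd i ho, ho.neg_one_pow, hr.neg_one_pow]; ring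
    rw [Finset.prod_congr rfl fun i _ => this i, Finset.prod_const, Finset.card_univ,
      Fintype.card_fin]
  have hLeven : ∀ r : ℕ, Even r → (∏ i, (1 + (-1) ^ n i * a i ^ r)) = 0 := by
    intro r hr
    obtain ⟨i0, hi0⟩ := hodd
    apply Finset.prod_eq_zero (Finset.mem_univ i0)
    rw [haodd i0 hi0, hi0.neg_one_pow, hr.neg_one_pow]; ring
  refine ⟨?_, ?_, ?_⟩
  · simpa using hLodd 1 odd_one
  · have h2 : (2 : ℕ).divisors = {1, 2} := by decide
    rw [h2, Finset.sum_insert (by decide), Finset.sum_singleton]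
    rw [hLodd 1 odd_one, hLeven 2 even_two]
    norm_num [ArithmeticFunction.moebius_apply_prime Nat.prime_two]
  · intro m hm
    have hm0 : m ≠ 0 := by omega
    -- reduce to sum over odd divisors
    have key : (∑ r ∈ m.divisors, (ArithmeticFunction.moebius (m / r) : ℤ) *
        ∏ i, (1 + (-1) ^ n i * a i ^ r)) =
        2 ^ l * ∑ r ∈ m.divisors.filter Odd, (ArithmeticFunction.moebius (m / r) : ℤ) := by
      rw [Finset.mul_sum, Finset.sum_filter]
      refine Finset.sum_congr rfl fun r hr => ?_
      rcases Nat.even_or_odd r with he | ho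
      · rw [hLeven r he, mul_zero, if_neg (Nat.not_odd_iff_even.mpr he)]
      · rw [hLodd r ho, if_pos ho]; ring
    rw [key]
    rcases Nat.even_or_odd m with hme | hmo
    · -- m even
      rcases Nat.even_or_odd (m / 2) with hq2 | hq1
      · -- 4 ∣ m : every term vanishes
        have h4 : 4 ∣ m := by
          obtain ⟨t, ht⟩ := hq2
          obtain ⟨s, hs⟩ := hme
          omega
        have : ∀ r ∈ m.divisors.filter Odd,
            (ArithmeticFunction.moebius (m / r) : ℤ) = 0 := by
          intro r hr
          rw [Finset.mem_filter, Nat.mem_divisors] at hr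
          obtain ⟨⟨hrd, _⟩, hro⟩ := hr
          apply_mod_cast ArithmeticFunction.moebius_eq_zero_of_not_squarefree
          intro hsq
          have h2 : (2 * 2 : ℕ) ∣ m / r := by
            have hr0 : 0 < r := Nat.pos_of_ne_zero (by rintro rfl; simp at hro)
            obtain ⟨c, hc⟩ := hrd
            obtain ⟨d, hd⟩ := h4
            -- m = r * c, m = 4 * d, r odd ⇒ 4 ∣ c = m / r
            have hc' : m / r = c := by rw [hc]; exact Nat.mul_div_cancel_left c hr0
            rw [hc']
            have : (4 : ℕ) ∣ r * c := by rw [← hc, hd]; exact ⟨d, rfl⟩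
            have h2r : ¬ 2 ∣ r := by
              have := Nat.odd_iff.mp hro; omega
            have hcop2 : Nat.Coprime 2 r :=
              (Nat.Prime.coprime_iff_not_dvd Nat.prime_two).mpr h2r
            have hcop : Nat.Coprime 4 r := by
              have := Nat.Coprime.pow_left 2 hcop2
              norm_num at this
              exact this
            exact (Nat.Coprime.dvd_of_dvd_mul_left hcop this)
          have := hsq 2 h2
          norm_num at this
        rw [Finset.sum_eq_zero this, mul_zero]
      · -- m ≡ 2 mod 4 : odd divisors of m are divisors of m/2
        set q := m / 2 with hq
        have hmq : m = 2 * q := by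
          obtain ⟨s, hs⟩ := hme; omega
        have hq2 : 2 ≤ q := by
          by_contra h
          interval_cases q
          · omega
          · omega
        have hfe : m.divisors.filter Odd = q.divisors := by
          ext r
          simp only [Finset.mem_filter, Nat.mem_divisors]
          constructor
          · rintro ⟨⟨hrd, _⟩, hro⟩
            refine ⟨?_, by omega⟩
            have h2r : ¬ 2 ∣ r := by
              have := Nat.odd_iff.mp hro; omega
            have hcop : Nat.Coprime r 2 :=
              Nat.coprime_comm.mp ((Nat.Prime.coprime_iff_not_dvd Nat.prime_two).mpr h2r)
            exact hcop.dvd_of_dvd_mul_left (hmq ▸ hrd)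
          · rintro ⟨hrd, _⟩
            refine ⟨⟨dvd_trans hrd ⟨2, by omega⟩, hm0⟩, ?_⟩
            exact hq1.of_dvd_nat hrd
        rw [hfe]
        have hterm : ∀ r ∈ q.divisors,
            (ArithmeticFunction.moebius (m / r) : ℤ) =
            -(ArithmeticFunction.moebius (q / r) : ℤ) := by
          intro r hr
          rw [Nat.mem_divisors] at hr
          have hdiv : m / r = 2 * (q / r) := by
            rw [hmq, Nat.mul_div_assoc 2 hr.1]
          rw [hdiv]
          have hco : Nat.Coprime 2 (q / r) := by
            have hoqr : Odd (q / r) := hq1.of_dvd_nat (Nat.div_dvd_of_dvd hr.1)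
            exact (Nat.Prime.coprime_iff_not_dvd Nat.prime_two).mpr
              (by have := Nat.odd_iff.mp hoqr; omega)
          rw [ArithmeticFunction.isMultiplicative_moebius.map_mul_of_coprime hco,
            ArithmeticFunction.moebius_apply_prime Nat.prime_two]
          push_cast
          ring
        rw [Finset.sum_congr rfl hterm, Finset.sum_neg_distrib]
        rw [Nat.sum_div_divisors q (fun d => (ArithmeticFunction.moebius d : ℤ)),
          sum_moebius_eq_zero_aux hq2]
        ring
    · -- m odd : all divisors odd
      have hfe : m.divisors.filter Odd = m.divisors := by
        apply Finset.filter_true_of_mem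
        intro r hr
        rw [Nat.mem_divisors] at hr
        exact hmo.of_dvd_nat hr.1
      rw [hfe, Nat.sum_div_divisors m (fun d => (ArithmeticFunction.moebius d : ℤ)),
        sum_moebius_eq_zero_aux (by omega), mul_zero]
end

section
/- Let l ≥ 1, let n₁, …, n_l be even positive integers and a₁, …, a_l integers with a_i ∈ {1, −1} for every i and a_j = −1 for some j. Then ℓ(2) = 2^l and ℓ(m) = 0 for every positive integer m ≠ 2, where ℓ(m) := ∑_{r ∣ m} μ(m/r) ∏_{i=1}^{l} (1 + (−1)^{n_i} a_i^r). -/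
open Finset

lemma sum_moebius_divisors (n : ℕ) :
    (∑ d ∈ n.divisors, ArithmeticFunction.moebius d) = if n = 1 then 1 else 0 := by
  have := congrArg (fun f : ArithmeticFunction ℤ => f n)
    ArithmeticFunction.moebius_mul_coe_zeta
  rwa [ArithmeticFunction.coe_mul_zeta_apply, ArithmeticFunction.one_apply] at this

lemma L_eval (l : ℕ) (n : Fin l → ℕ) (hne : ∀ i, Even (n i))
    (a : Fin l → ℤ) (ha : ∀ i, a i = 1 ∨ a i = -1) (haj : ∃ j, a j = -1)
    (r : ℕ) :
    (∏ i, (1 + (-1) ^ n i * a i ^ r)) = if 2 ∣ r then 2 ^ l else 0 := by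
  have hpow : ∀ i, ((-1 : ℤ)) ^ n i = 1 := fun i => (hne i).neg_one_pow
  by_cases h2 : 2 ∣ r
  · simp only [if_pos h2]
    have : ∀ i, (1 + (-1) ^ n i * a i ^ r) = 2 := by
      intro i
      have : a i ^ r = 1 := by
        rcases ha i with h | h
        · simp [h]
        · obtain ⟨k, rfl⟩ := h2
          rw [h, pow_mul]; norm_num
      rw [hpow i, this]; ring
    simp [this]
  · simp only [if_neg h2]
    obtain ⟨j, hj⟩ := haj
    apply Finset.prod_eq_zero (Finset.mem_univ j)
    have hodd : Odd r := Nat.odd_iff.mpr (Nat.not_even_iff.mp (fun h => h2 h.two_dvd))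
    rw [hpow j, hj, hodd.neg_one_pow]; ring

/-- If all sphere dimensions `nᵢ` are even, all basic eigenvalues satisfy `aᵢ = ±1`,
and some `aⱼ = -1`, then `ℓ(2) = 2^l` and `ℓ(m) = 0` for every positive `m ≠ 2`, where
`ℓ(m) = ∑_{r∣m} μ(m/r) ∏ᵢ (1 + (-1)^{nᵢ} aᵢʳ)`. -/
theorem lefschetz_period_numbers_all_even_some_minus
    (l : ℕ) (hl : 1 ≤ l) (n : Fin l → ℕ) (hn : ∀ i, 0 < n i) (hne : ∀ i, Even (n i))
    (a : Fin l → ℤ) (ha : ∀ i, a i = 1 ∨ a i = -1) (haj : ∃ j, a j = -1) :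
    (∑ r ∈ (2 : ℕ).divisors, ArithmeticFunction.moebius (2 / r) *
        ∏ i, (1 + (-1) ^ n i * a i ^ r)) = 2 ^ l ∧
    ∀ m : ℕ, 0 < m → m ≠ 2 →
      (∑ r ∈ m.divisors, ArithmeticFunction.moebius (m / r) *
          ∏ i, (1 + (-1) ^ n i * a i ^ r)) = 0 := by
  constructor
  · have h1 : (∏ i, (1 + (-1) ^ n i * a i ^ 1)) = 0 := by
      rw [L_eval l n hne a ha haj 1]; norm_num
    have h2 : (∏ i, (1 + (-1) ^ n i * a i ^ 2)) = (2 : ℤ) ^ l := by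
      rw [L_eval l n hne a ha haj 2]; norm_num
    have h1' : (∏ i, (1 + (-1) ^ n i * a i)) = 0 := by simpa using h1
    rw [show (2:ℕ).divisors = {1, 2} from rfl]
    simp [h1', h2]
  · intro m hm hm2
    have key : ∀ r ∈ m.divisors,
        (ArithmeticFunction.moebius (m / r) : ℤ) * ∏ i, (1 + (-1) ^ n i * a i ^ r)
          = ArithmeticFunction.moebius (m / r) * (if 2 ∣ r then 2 ^ l else 0) := by
      intro r _
      rw [L_eval l n hne a ha haj r]
    rw [Finset.sum_congr rfl key]
    by_cases hme : 2 ∣ m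
    · obtain ⟨m', rfl⟩ := hme
      have hm' : 0 < m' := by omega
      have hm'1 : m' ≠ 1 := by omega
      rw [← Finset.sum_filter_add_sum_filter_not ((2*m').divisors) (fun r => 2 ∣ r)]
      have hzero : (∑ r ∈ (2*m').divisors.filter (fun r => ¬ 2 ∣ r),
          (ArithmeticFunction.moebius (2*m' / r) : ℤ) * (if 2 ∣ r then 2 ^ l else 0)) = 0 := by
        apply Finset.sum_eq_zero
        intro r hr
        rw [if_neg (Finset.mem_filter.mp hr).2, mul_zero]
      rw [hzero, add_zero]
      have hbij : (∑ r ∈ (2*m').divisors.filter (fun r => 2 ∣ r),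
            (ArithmeticFunction.moebius (2*m' / r) : ℤ) * (if 2 ∣ r then 2 ^ l else 0))
          = ∑ s ∈ m'.divisors, (ArithmeticFunction.moebius (m' / s) : ℤ) * 2 ^ l := by
        refine Finset.sum_nbij' (fun r => r / 2) (fun s => 2 * s) ?_ ?_ ?_ ?_ ?_
        · intro r hr
          obtain ⟨hrd, s, rfl⟩ := Finset.mem_filter.mp hr
          rw [Nat.mul_div_cancel_left s two_pos]
          rw [Nat.mem_divisors] at hrd ⊢
          exact ⟨(Nat.mul_dvd_mul_iff_left two_pos).mp hrd.1, by omega⟩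
        · intro s hs
          rw [Nat.mem_divisors] at hs
          exact Finset.mem_filter.mpr ⟨Nat.mem_divisors.mpr
            ⟨Nat.mul_dvd_mul_left 2 hs.1, by omega⟩, ⟨s, rfl⟩⟩
        · intro r hr
          obtain ⟨_, s, rfl⟩ := Finset.mem_filter.mp hr
          omega
        · intro s _
          omega
        · intro r hr
          obtain ⟨_, s, rfl⟩ := Finset.mem_filter.mp hr
          rw [if_pos ⟨s, rfl⟩, Nat.mul_div_cancel_left s two_pos]
          congr 2
          exact Nat.mul_div_mul_left _ _ two_pos
      rw [hbij, ← Finset.sum_mul, Nat.sum_div_divisors, sum_moebius_divisors,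
        if_neg hm'1, zero_mul]
    · apply Finset.sum_eq_zero
      intro r hr
      rw [if_neg (fun h => hme (h.trans (Nat.dvd_of_mem_divisors hr))), mul_zero]
end

section
/- Let l ≥ 1, let n₁, …, n_l be positive integers and a₁, …, a_l integers, and set L(m) := ∏_{i=1}^{l} (1 + (−1)^{n_i} a_i^m) for m ≥ 1. The sequence (L(m))_{m≥1} is unbounded if and only if all three of the following hold: (i) a_i ≠ 1 for every i with n_i odd; (ii) |a_j| > 1 for some j; and (iii) it is not the case that both some i has n_i even and a_i = −1 and some k has n_k odd and a_k = −1. -/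
open Finset

/-!
A factor `1 + (-1)^k a^m` vanishes only if `|a| = 1`: either `a = 1` with `k` odd, or `a = -1`
with `k + m` odd. If every `|aᵢ| ≤ 1`, each factor is at most `2`; if (i) or (iii) fails, some
factor vanishes for every `m ≥ 1`. Conversely, under (i) and (iii) there is a parity of `m` for
which no factor vanishes, so each factor is a nonzero integer dividing `L(m)`, and
`|L(m)| ≥ |aⱼ|^m - 1 ≥ 2^m - 1`.
-/

theorem Int.abs_le_abs_of_dvd {a b : ℤ} (h : a ∣ b) (hb : b ≠ 0) : |a| ≤ |b| := by
  rw [Int.abs_eq_natAbs, Int.abs_eq_natAbs]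
  exact_mod_cast Int.natAbs_le_of_dvd_ne_zero h hb

theorem Finset.abs_le_abs_prod_of_prod_ne_zero {ι : Type*} {s : Finset ι} {f : ι → ℤ}
    (hf : ∏ i ∈ s, f i ≠ 0) {j : ι} (hj : j ∈ s) : |f j| ≤ |∏ i ∈ s, f i| :=
  Int.abs_le_abs_of_dvd (dvd_prod_of_mem f hj) hf

theorem one_add_neg_one_pow_eq_zero_iff {j : ℕ} : 1 + (-1 : ℤ) ^ j = 0 ↔ Odd j := by
  rw [add_eq_zero_iff_eq_neg', neg_one_pow_eq_neg_one_iff_odd (by decide)]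

theorem one_add_neg_one_pow_mul_pow_eq_zero_iff {k m : ℕ} {a : ℤ} (hm : m ≠ 0) :
    1 + (-1) ^ k * a ^ m = 0 ↔ (a = 1 ∧ Odd k) ∨ (a = -1 ∧ (Odd k ↔ Even m)) := by
  constructor
  · intro h
    have habs : |a| = 1 := by
      have hpow : (-1) ^ k * a ^ m = -1 := by linarith
      apply_fun abs at hpow
      simp only [abs_mul, abs_pow, abs_neg, abs_one, one_pow, one_mul] at hpow
      exact (pow_eq_one_iff_of_nonneg (abs_nonneg a) hm).1 hpow
    rcases (abs_eq zero_le_one).1 habs with rfl | rfl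
    · rw [one_pow, mul_one, one_add_neg_one_pow_eq_zero_iff] at h
      exact .inl ⟨rfl, h⟩
    · rw [← pow_add, one_add_neg_one_pow_eq_zero_iff, Nat.odd_add] at h
      exact .inr ⟨rfl, h⟩
  · rintro (⟨rfl, hk⟩ | ⟨rfl, hkm⟩)
    · rwa [one_pow, mul_one, one_add_neg_one_pow_eq_zero_iff]
    · rwa [← pow_add, one_add_neg_one_pow_eq_zero_iff, Nat.odd_add]

theorem abs_pow_sub_one_le_abs_one_add_neg_one_pow_mul_pow (k m : ℕ) (a : ℤ) :
    |a| ^ m - 1 ≤ |1 + (-1) ^ k * a ^ m| := by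
  simpa [abs_mul, abs_pow, add_comm] using abs_sub_abs_le_abs_sub ((-1) ^ k * a ^ m) (-1)

theorem abs_one_add_neg_one_pow_mul_pow_le_two {a : ℤ} (ha : |a| ≤ 1) (k m : ℕ) :
    |1 + (-1) ^ k * a ^ m| ≤ 2 :=
  calc |1 + (-1) ^ k * a ^ m| ≤ 1 + |a| ^ m := by
        simpa [abs_mul, abs_pow] using abs_add_le 1 ((-1) ^ k * a ^ m)
    _ ≤ 2 := by linarith [pow_le_one₀ (abs_nonneg a) ha (n := m)]

section Lefschetz

variable {ι : Type*} [Fintype ι] (n : ι → ℕ) (a : ι → ℤ)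

theorem prod_one_add_neg_one_pow_mul_pow_eq_zero_of_odd_of_eq_one {i : ι} (hi : Odd (n i))
    (hai : a i = 1) (m : ℕ) : ∏ i, (1 + (-1) ^ n i * a i ^ m) = 0 := by
  refine prod_eq_zero (mem_univ i) ?_
  rwa [hai, one_pow, mul_one, one_add_neg_one_pow_eq_zero_iff]

theorem prod_one_add_neg_one_pow_mul_pow_eq_zero_of_eq_neg_one {i k : ι} (hi : Even (n i))
    (hai : a i = -1) (hk : Odd (n k)) (hak : a k = -1) {m : ℕ} (hm : m ≠ 0) :
    ∏ i, (1 + (-1) ^ n i * a i ^ m) = 0 := by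
  rcases Nat.even_or_odd m with hme | hmo
  · exact prod_eq_zero (mem_univ k)
      ((one_add_neg_one_pow_mul_pow_eq_zero_iff hm).2 (.inr ⟨hak, iff_of_true hk hme⟩))
  · refine prod_eq_zero (mem_univ i)
      ((one_add_neg_one_pow_mul_pow_eq_zero_iff hm).2 (.inr ⟨hai, iff_of_false ?_ ?_⟩))
    · exact Nat.not_odd_iff_even.2 hi
    · exact Nat.not_even_iff_odd.2 hmo

theorem abs_prod_one_add_neg_one_pow_mul_pow_le (ha : ∀ i, |a i| ≤ 1) (m : ℕ) :
    |∏ i, (1 + (-1) ^ n i * a i ^ m)| ≤ 2 ^ Fintype.card ι := by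
  rw [abs_prod, ← card_univ, ← prod_const]
  exact prod_le_prod (fun i _ ↦ abs_nonneg _)
    (fun i _ ↦ abs_one_add_neg_one_pow_mul_pow_le_two (ha i) (n i) m)

/-- Under conditions (i) and (iii), all odd `m` (if some odd-dimensional eigenvalue is `-1`) or
all even `m` (otherwise) avoid every zero factor. -/
theorem exists_gt_forall_one_add_neg_one_pow_mul_pow_ne_zero
    (h1 : ∀ i, Odd (n i) → a i ≠ 1)
    (h3 : ¬ ((∃ i, Even (n i) ∧ a i = -1) ∧ (∃ k, Odd (n k) ∧ a k = -1))) (N : ℕ) :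
    ∃ m, N < m ∧ ∀ i, 1 + (-1) ^ n i * a i ^ m ≠ 0 := by
  by_cases hodd : ∃ k, Odd (n k) ∧ a k = -1
  · refine ⟨2 * N + 1, by omega, fun i hzero ↦ ?_⟩
    rcases (one_add_neg_one_pow_mul_pow_eq_zero_iff (by omega)).1 hzero with
      ⟨hai, hi⟩ | ⟨hai, hparity⟩
    · exact h1 i hi hai
    · have hi : Even (n i) := Nat.not_odd_iff_even.1 fun hi ↦
        Nat.not_even_iff_odd.2 (odd_two_mul_add_one N) (hparity.1 hi)
      exact h3 ⟨⟨i, hi, hai⟩, hodd⟩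
  · refine ⟨2 * N + 2, by omega, fun i hzero ↦ ?_⟩
    rcases (one_add_neg_one_pow_mul_pow_eq_zero_iff (by omega)).1 hzero with
      ⟨hai, hi⟩ | ⟨hai, hparity⟩
    · exact h1 i hi hai
    · exact hodd ⟨i, hparity.2 ⟨N + 1, by ring⟩, hai⟩

end Lefschetz

theorem lefschetz_numbers_unbounded_iff_general
    (l : ℕ) (n : Fin l → ℕ) (a : Fin l → ℤ) :
    (¬ ∃ B : ℤ, ∀ m : ℕ, 1 ≤ m → |∏ i, (1 + (-1) ^ n i * a i ^ m)| ≤ B) ↔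
      ((∀ i, Odd (n i) → a i ≠ 1) ∧ (∃ j, 1 < |a j|) ∧
        ¬ ((∃ i, Even (n i) ∧ a i = -1) ∧ (∃ k, Odd (n k) ∧ a k = -1))) := by
  constructor
  · intro hunbdd
    refine ⟨fun i hi hai ↦ hunbdd ⟨0, fun m _ ↦ ?_⟩, ?_, fun ⟨⟨i, hi, hai⟩, ⟨k, hk, hak⟩⟩ ↦
      hunbdd ⟨0, fun m hm ↦ ?_⟩⟩
    · rw [prod_one_add_neg_one_pow_mul_pow_eq_zero_of_odd_of_eq_one n a hi hai, abs_zero]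
    · by_contra! ha
      exact hunbdd ⟨_, fun m _ ↦ abs_prod_one_add_neg_one_pow_mul_pow_le n a ha m⟩
    · rw [prod_one_add_neg_one_pow_mul_pow_eq_zero_of_eq_neg_one n a hi hai hk hak (by omega),
        abs_zero]
  · rintro ⟨h1, ⟨j, hj⟩, h3⟩ ⟨B, hB⟩
    obtain ⟨m, hBm, hne⟩ :=
      exists_gt_forall_one_add_neg_one_pow_mul_pow_ne_zero n a h1 h3 B.toNat
    have hprod : ∏ i, (1 + (-1) ^ n i * a i ^ m) ≠ 0 := prod_ne_zero_iff.2 fun i _ ↦ hne i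
    have h2m : (m : ℤ) < 2 ^ m := by exact_mod_cast Nat.lt_two_pow_self
    have hgrowth := calc (2 : ℤ) ^ m - 1
        _ ≤ |a j| ^ m - 1 := by gcongr; omega
        _ ≤ |1 + (-1) ^ n j * a j ^ m| := abs_pow_sub_one_le_abs_one_add_neg_one_pow_mul_pow _ _ _
        _ ≤ |∏ i, (1 + (-1) ^ n i * a i ^ m)| := abs_le_abs_prod_of_prod_ne_zero hprod (mem_univ j)
        _ ≤ B := hB m (by omega)
    omega

/-- The sequence of Lefschetz numbers `L(m) = ∏ᵢ (1 + (-1)^{nᵢ} aᵢᵐ)`, `m ≥ 1`, is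
unbounded if and only if: (i) `aᵢ ≠ 1` whenever `nᵢ` is odd; (ii) some `|aⱼ| > 1`; and
(iii) it is not the case that both some even-dimensional eigenvalue equals `-1` and some
odd-dimensional eigenvalue equals `-1`. -/
theorem lefschetz_numbers_unbounded_iff
    (l : ℕ) (hl : 1 ≤ l) (n : Fin l → ℕ) (hn : ∀ i, 0 < n i) (a : Fin l → ℤ) :
    (¬ ∃ B : ℤ, ∀ m : ℕ, 1 ≤ m → |∏ i, (1 + (-1) ^ n i * a i ^ m)| ≤ B) ↔
      ((∀ i, Odd (n i) → a i ≠ 1) ∧ (∃ j, 1 < |a j|) ∧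
        ¬ ((∃ i, Even (n i) ∧ a i = -1) ∧ (∃ k, Odd (n k) ∧ a k = -1))) :=
  lefschetz_numbers_unbounded_iff_general l n a
end
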